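/- arXiv:1703.07663 — 4 statements merged into one kernel-verified Lean document; each statement's English description precedes it below -/
import Mathlib

section
/- Let p be a prime with p ∉ {2, 3} and let e ≥ 1 be an integer. Then the number of residue classes x in ℤ/p^eℤ satisfying x² + x + 1 = 0 equals 1 + (−3/p), where (−3/p) denotes the Legendre symbol of −3 modulo p. -/
/-!
Since `2` is invertible mod `p`, completing the square `(2x + 1)² = 4(x² + x + 1) - 3` matches
the roots of `x² + x + 1` in `𝔽_p` with the square roots of `-3`, of which there are
`1 + (-3/p)`. Reduction `ℤ/p^eℤ → 𝔽_p` is a bijection on roots (Hensel): its kernel is nilpotent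
and the derivative `2x + 1` is a unit at every root mod `p`, because its square is `-3` mod `p`
and `p ≠ 3`.
-/

open Polynomial

theorem Polynomial.bijOn_setOf_eval_eq_zero_map_of_isNilpotent_ker {R S : Type*} [CommRing R]
    [CommRing S] [IsReduced S] {φ : R →+* S} (hφ : Function.Surjective φ)
    (hker : ∀ a, φ a = 0 → IsNilpotent a) {P : R[X]}
    (hP : ∀ x, φ (P.eval x) = 0 → IsUnit (P.derivative.eval x)) :
    Set.BijOn φ {x | P.eval x = 0} {y | (P.map φ).eval y = 0} := by
  refine ⟨fun x hx ↦ by simp_all, fun x hx y hy hxy ↦ ?_, fun y hy ↦ ?_⟩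
  · have hx' : P.eval x = 0 := hx
    have hunique := existsUnique_nilpotent_sub_and_aeval_eq_zero (S := R) (x := x) (P := P)
      (by simp [hx']) (by simpa using hP x (by simp [hx']))
    exact hunique.unique ⟨by simp, by simpa using hx'⟩
      ⟨hker _ (by rw [map_sub, hxy, sub_self]), by simpa using hy⟩
  · obtain ⟨x, rfl⟩ := hφ y
    have hPx : φ (P.eval x) = 0 := by simpa using hy
    obtain ⟨r, ⟨hxr, hr⟩, -⟩ := existsUnique_nilpotent_sub_and_aeval_eq_zero (S := R) (x := x)
      (P := P) (by simpa using hker _ hPx) (by simpa using hP x hPx)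
    refine ⟨r, by simpa using hr, ?_⟩
    rw [eq_comm, ← sub_eq_zero, ← map_sub]
    exact (hxr.map φ).eq_zero

theorem ZMod.isNilpotent_of_castHom_eq_zero {n k : ℕ} (hk : k ≠ 0) {a : ZMod (n ^ k)}
    (ha : ZMod.castHom (dvd_pow_self n hk) (ZMod n) a = 0) : IsNilpotent a := by
  rw [ZMod.castHom_apply, ← ZMod.intCast_zmod_cast a, ZMod.cast_intCast (dvd_pow_self n hk),
    ZMod.intCast_zmod_eq_zero_iff_dvd] at ha
  obtain ⟨c, hc⟩ := ha
  refine ⟨k, ?_⟩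
  rw [← ZMod.intCast_zmod_cast a, hc, ← Int.cast_pow, mul_pow, ZMod.intCast_zmod_eq_zero_iff_dvd]
  exact dvd_mul_of_dvd_left (by norm_cast) _

theorem isUnit_two_mul_add_one_of_isNilpotent {R : Type*} [CommRing R] (h3 : IsUnit (3 : R))
    {x : R} (hx : IsNilpotent (x ^ 2 + x + 1)) : IsUnit (2 * x + 1) := by
  have hsq : (2 * x + 1) ^ 2 = -3 + 4 * (x ^ 2 + x + 1) := by ring
  rw [← isUnit_pow_iff two_ne_zero, hsq]
  exact (Commute.all _ _).isNilpotent_mul_left hx |>.isUnit_add_left_of_commute h3.neg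
    (Commute.all _ _)

theorem ncard_setOf_sq_add_add_one_eq_zero_eq_ncard_sqrt_neg_three {F : Type*} [Field F]
    (h2 : (2 : F) ≠ 0) :
    {x : F | x ^ 2 + x + 1 = 0}.ncard = {y : F | y ^ 2 = -3}.ncard := by
  refine Set.BijOn.ncard_eq (f := fun x ↦ 2 * x + 1) ⟨fun x hx ↦ ?_, fun x _ y _ hxy ↦ ?_,
    fun y hy ↦ ⟨(y - 1) / 2, ?_, ?_⟩⟩
  · simp only [Set.mem_ofPred_eq] at hx ⊢
    linear_combination 4 * hx
  · simpa [h2] using hxy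
  · simp only [Set.mem_ofPred_eq] at hy ⊢
    field_simp
    linear_combination hy
  · simp only
    field_simp
    ring

theorem ncard_setOf_sq_add_add_one_eq_zero_zmod_prime_pow {p e : ℕ} (hp : p.Prime) (hp3 : p ≠ 3)
    (he : e ≠ 0) :
    {x : ZMod (p ^ e) | x ^ 2 + x + 1 = 0}.ncard = {x : ZMod p | x ^ 2 + x + 1 = 0}.ncard := by
  have : Fact p.Prime := ⟨hp⟩
  have h3 : IsUnit (3 : ZMod (p ^ e)) := by
    simpa using (ZMod.isUnit_iff_coprime 3 (p ^ e)).mpr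
      (Nat.Coprime.pow_right e ((Nat.coprime_primes Nat.prime_three hp).mpr (Ne.symm hp3)))
  have hbij := Polynomial.bijOn_setOf_eval_eq_zero_map_of_isNilpotent_ker
    (P := X ^ 2 + X + 1) (ZMod.castHom_surjective (dvd_pow_self p he))
    (fun _ ↦ ZMod.isNilpotent_of_castHom_eq_zero he) fun x hx ↦ by
      simpa [one_add_one_eq_two] using isUnit_two_mul_add_one_of_isNilpotent h3
        (ZMod.isNilpotent_of_castHom_eq_zero he (by simpa using hx))
  simpa using hbij.ncard_eq

/-- Let `p` be a prime with `p ∉ {2, 3}` and let `e ≥ 1`. Then the number of residue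
classes `x` in `ℤ/p^eℤ` satisfying `x² + x + 1 = 0` equals `1 + (−3/p)`, where `(−3/p)`
is the Legendre symbol of `−3` modulo `p`. -/
theorem count_roots_x_sq_add_x_add_one_eq_one_add_legendreSym
    (p : ℕ) (hp : p.Prime) (hp2 : p ≠ 2) (hp3 : p ≠ 3) (e : ℕ) (he : 1 ≤ e) :
    ({x : ZMod (p ^ e) | x ^ 2 + x + 1 = 0}.ncard : ℤ) = 1 + @legendreSym p ⟨hp⟩ (-3) := by
  have : Fact p.Prime := ⟨hp⟩
  have h2 : (2 : ZMod p) ≠ 0 := Ring.two_ne_zero (by rwa [ZMod.ringChar_zmod_n])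
  rw [ncard_setOf_sq_add_add_one_eq_zero_zmod_prime_pow hp hp3 (by omega),
    ncard_setOf_sq_add_add_one_eq_zero_eq_ncard_sqrt_neg_three h2, add_comm,
    ← legendreSym.card_sqrts p hp2, Set.ncard_eq_toFinset_card']
  simp
end

section
/- Let p be a prime. For e ≥ 0 let q(e) denote the number of residue classes x in ℤ/p^eℤ satisfying x² + 1 = 0 (so q(0) = 1), and set q(e) = 0 for e < 0. Then for every integer e ≥ 0, the quantity q(e) − 2·q(e−1) + q(e−2) equals: in the case p odd: 1 if e = 0, (−1/p) − 1 if e = 1, −(−1/p) if e = 2, and 0 if e ≥ 3; in the case p = 2: 1 if e = 0, −1 if e = 1 or e = 2, 1 if e = 3, and 0 if e ≥ 4. -/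
/-!
Reduction `ZMod (p ^ (e + 1)) → ZMod (p ^ e)` has a square-zero kernel when `e ≥ 1`, so if `2c`
is a unit, Newton's step `z ↦ z - (z ^ 2 - c) / (2z)` lifts each square root of `c` uniquely.
For odd `p` this gives `q e = q 1 = 1 + (-1/p)` for all `e ≥ 1`; for `p = 2`, `-1` is a square
modulo `2` but not modulo `4`. The second differences are read off from these closed forms.
-/
section SquareZeroKernel

variable {R S : Type*} [CommRing R] [CommRing S] (f : R →+* S)

theorem RingHom.injOn_setOf_sq_eq (hker : ∀ z, f z = 0 → z ^ 2 = 0) {c : R}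
    (hc : IsUnit (2 * c)) : Set.InjOn f {x | x ^ 2 = c} := by
  intro x (hx : x ^ 2 = c) y (hy : y ^ 2 = c) hxy
  have hd : (x - y) ^ 2 = 0 := hker _ (by rw [map_sub, hxy, sub_self])
  have hu : IsUnit (2 * y) := isUnit_of_mul_isUnit_left (x := 2 * y) (y := y) <| by
    rwa [mul_assoc, ← sq, hy]
  have h : 2 * y * (x - y) = 0 := by linear_combination hx - hy - hd
  exact sub_eq_zero.mp (hu.mul_right_eq_zero.mp h)

theorem RingHom.surjOn_setOf_sq_eq (hf : Function.Surjective f)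
    (hker : ∀ z, f z = 0 → z ^ 2 = 0) {c : R} (hc : IsUnit (2 * c)) :
    Set.SurjOn f {x | x ^ 2 = c} {y | y ^ 2 = f c} := by
  intro y (hy : y ^ 2 = f c)
  obtain ⟨z, rfl⟩ := hf y
  set k := z ^ 2 - c with hk_def
  have hfk : f k = 0 := by rw [map_sub, map_pow, hy, sub_self]
  have hk : k ^ 2 = 0 := hker k hfk
  have hu : IsUnit (2 * z) := isUnit_of_mul_isUnit_left (x := 2 * z) (y := z) <| by
    have : 2 * z * z = 2 * c + 2 * k := by rw [hk_def]; ring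
    rw [this]
    exact (IsNilpotent.mk _ 2 (by linear_combination 4 * hk)).isUnit_add_left_of_commute hc
      (Commute.all _ _)
  obtain ⟨u, hzu⟩ := hu.exists_right_inv
  refine ⟨z - k * u, ?_, by rw [map_sub, map_mul, hfk, zero_mul, sub_zero]⟩
  show (z - k * u) ^ 2 = c
  linear_combination (-k) * hzu + u ^ 2 * hk - hk_def

theorem RingHom.ncard_setOf_sq_eq (hf : Function.Surjective f)
    (hker : ∀ z, f z = 0 → z ^ 2 = 0) {c : R} (hc : IsUnit (2 * c)) :
    {x | x ^ 2 = c}.ncard = {y | y ^ 2 = f c}.ncard := by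
  rw [← (f.surjOn_setOf_sq_eq hf hker hc).image_eq_of_mapsTo
    (fun x (hx : x ^ 2 = c) => show f x ^ 2 = f c by rw [← map_pow, hx]),
    (f.injOn_setOf_sq_eq hker hc).ncard_image]

end SquareZeroKernel

namespace ZMod

variable {p : ℕ}

theorem isUnit_of_castHom_ne_zero (hp : p.Prime) {n : ℕ} (hn : n ≠ 0) {x : ZMod (p ^ n)}
    (hx : castHom (dvd_pow_self p hn) (ZMod p) x ≠ 0) : IsUnit x := by
  have : NeZero (p ^ n) := ⟨pow_ne_zero n hp.ne_zero⟩
  rw [castHom_apply, cast_eq_val, Ne, natCast_eq_zero_iff] at hx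
  rw [← natCast_zmod_val x, isUnit_natCast_iff_not_dvd_pow hp (Nat.pos_of_ne_zero hn)]
  exact hx

theorem sq_eq_zero_of_castHom_pow_succ_eq_zero (hp : p.Prime) {e : ℕ} (he : e ≠ 0)
    {z : ZMod (p ^ (e + 1))} (hz : castHom (pow_dvd_pow p e.le_succ) (ZMod (p ^ e)) z = 0) :
    z ^ 2 = 0 := by
  have : NeZero (p ^ (e + 1)) := ⟨pow_ne_zero _ hp.ne_zero⟩
  rw [castHom_apply, cast_eq_val, natCast_eq_zero_iff] at hz
  rw [← natCast_zmod_val z, ← Nat.cast_pow, natCast_eq_zero_iff]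
  calc p ^ (e + 1) ∣ (p ^ e) ^ 2 := by rw [← pow_mul]; exact pow_dvd_pow p (by omega)
    _ ∣ z.val ^ 2 := pow_dvd_pow_of_dvd hz 2

theorem ncard_sqrts_prime_pow_succ [hp : Fact p.Prime] (hp2 : p ≠ 2) {a : ℤ}
    (ha : ¬ (p : ℤ) ∣ a) {e : ℕ} (he : e ≠ 0) :
    {x : ZMod (p ^ (e + 1)) | x ^ 2 = a}.ncard = {x : ZMod (p ^ e) | x ^ 2 = a}.ncard := by
  let f := castHom (pow_dvd_pow p e.le_succ) (ZMod (p ^ e))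
  have h2a : IsUnit (2 * (a : ZMod (p ^ (e + 1)))) := by
    refine isUnit_of_castHom_ne_zero hp.out e.succ_ne_zero ?_
    rw [map_mul, map_ofNat, map_intCast]
    refine mul_ne_zero ?_ ((intCast_zmod_eq_zero_iff_dvd a p).not.mpr ha)
    exact Ring.two_ne_zero (by rwa [ZMod.ringChar_zmod_n])
  simpa only [f, map_intCast] using
    f.ncard_setOf_sq_eq (castHom_surjective _)
      (fun _ => sq_eq_zero_of_castHom_pow_succ_eq_zero hp.out he) h2a

theorem ncard_sqrts_prime_pow [Fact p.Prime] (hp2 : p ≠ 2) {a : ℤ} (ha : ¬ (p : ℤ) ∣ a)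
    {e : ℕ} (he : e ≠ 0) :
    ({x : ZMod (p ^ e) | x ^ 2 = a}.ncard : ℤ) = legendreSym p a + 1 := by
  induction e, Nat.one_le_iff_ne_zero.mpr he using Nat.le_induction with
  | base => rw [pow_one, ← legendreSym.card_sqrts p hp2 a, Set.ncard_eq_toFinset_card']
  | succ e he₁ ih =>
    rw [ncard_sqrts_prime_pow_succ hp2 ha (by omega), ih (by omega)]

theorem ncard_sqrts_neg_one_two_pow_one : {x : ZMod (2 ^ 1) | x ^ 2 = -1}.ncard = 1 := by
  rw [Set.ncard_eq_one]
  exact ⟨1, by ext x; revert x; decide⟩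

theorem sqrts_neg_one_two_pow_eq_empty {e : ℕ} (he : 2 ≤ e) :
    {x : ZMod (2 ^ e) | x ^ 2 = -1} = ∅ := by
  refine Set.eq_empty_of_forall_notMem fun x (hx : x ^ 2 = -1) => ?_
  have h4 := congrArg (castHom (pow_dvd_pow 2 he) (ZMod (2 ^ 2))) hx
  rw [map_pow, map_neg, map_one] at h4
  revert h4
  generalize castHom (pow_dvd_pow 2 he) (ZMod (2 ^ 2)) x = y
  revert y
  decide

end ZMod

theorem Int.eq_ite_toNat_of_natCast {q : ℤ → ℤ} {g : ℕ → ℤ} (hneg : ∀ e : ℤ, e < 0 → q e = 0)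
    (hg : ∀ n : ℕ, q n = g n) (e : ℤ) : q e = if e < 0 then 0 else g e.toNat := by
  split_ifs with he
  · exact hneg e he
  · rw [← hg, Int.toNat_of_nonneg (not_lt.mp he)]

/-- Let `p` be a prime and, for `e ≥ 0`, let `q e` be the number of residue classes `x`
in `ℤ/p^eℤ` with `x² + 1 = 0` (so `q 0 = 1`), with `q e = 0` for `e < 0`. Then for every
`e ≥ 0`, `q e − 2 q (e−1) + q (e−2)` equals: for `p` odd: `1` if `e = 0`, `(−1/p) − 1` if
`e = 1`, `−(−1/p)` if `e = 2`, and `0` if `e ≥ 3`; for `p = 2`: `1` if `e = 0`, `−1` if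
`e = 1` or `e = 2`, `1` if `e = 3`, and `0` if `e ≥ 4`. -/
theorem second_difference_count_roots_x_sq_add_one
    (p : ℕ) (hp : p.Prime) (q : ℤ → ℤ)
    (hq : ∀ e : ℕ, q e = {x : ZMod (p ^ e) | x ^ 2 + 1 = 0}.ncard)
    (hneg : ∀ e : ℤ, e < 0 → q e = 0) :
    ∀ e : ℕ,
      (Odd p →
        (e = 0 → q e - 2 * q ((e : ℤ) - 1) + q ((e : ℤ) - 2) = 1) ∧
        (e = 1 → q e - 2 * q ((e : ℤ) - 1) + q ((e : ℤ) - 2) = @legendreSym p ⟨hp⟩ (-1) - 1) ∧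
        (e = 2 → q e - 2 * q ((e : ℤ) - 1) + q ((e : ℤ) - 2) = -(@legendreSym p ⟨hp⟩ (-1))) ∧
        (3 ≤ e → q e - 2 * q ((e : ℤ) - 1) + q ((e : ℤ) - 2) = 0)) ∧
      (p = 2 →
        (e = 0 → q e - 2 * q ((e : ℤ) - 1) + q ((e : ℤ) - 2) = 1) ∧
        (e = 1 ∨ e = 2 → q e - 2 * q ((e : ℤ) - 1) + q ((e : ℤ) - 2) = -1) ∧
        (e = 3 → q e - 2 * q ((e : ℤ) - 1) + q ((e : ℤ) - 2) = 1) ∧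
        (4 ≤ e → q e - 2 * q ((e : ℤ) - 1) + q ((e : ℤ) - 2) = 0)) := by
  have : Fact p.Prime := ⟨hp⟩
  have hq₀ : q 0 = 1 := by
    have : Subsingleton (ZMod (p ^ 0)) := by rw [pow_zero]; infer_instance
    rw [← Nat.cast_zero, hq, Nat.cast_eq_one, Set.ncard_eq_one]
    exact ⟨0, Set.eq_singleton_iff_unique_mem.mpr
      ⟨Subsingleton.elim _ _, fun _ _ => Subsingleton.elim _ _⟩⟩
  have hq' (e : ℕ) : q e = {x : ZMod (p ^ e) | x ^ 2 = -1}.ncard := by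
    simp only [hq, add_eq_zero_iff_eq_neg]
  intro e
  refine ⟨fun hodd => ?_, fun hp2 => ?_⟩
  · have hχ (n : ℕ) : q n = if n = 0 then 1 else legendreSym p (-1) + 1 := by
      split_ifs with hn
      · rw [hn, Nat.cast_zero, hq₀]
      · have h1 : ¬ (p : ℤ) ∣ -1 := by rw [dvd_neg]; exact_mod_cast hp.not_dvd_one
        have := ZMod.ncard_sqrts_prime_pow (hodd.ne_two_of_dvd_nat dvd_rfl) h1 hn
        push_cast at this
        rw [hq', this]
    have hq_closed := Int.eq_ite_toNat_of_natCast hneg hχ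
    refine ⟨?_, ?_, ?_, ?_⟩ <;> intro he <;> simp only [hq_closed] <;> split_ifs <;> omega
  · subst hp2
    have h2 (n : ℕ) : q n = if n ≤ 1 then 1 else 0 := by
      split_ifs with hn
      · rcases Nat.le_one_iff_eq_zero_or_eq_one.mp hn with rfl | rfl
        · exact hq₀
        · rw [hq', ZMod.ncard_sqrts_neg_one_two_pow_one, Nat.cast_one]
      · rw [hq', ZMod.sqrts_neg_one_two_pow_eq_empty (by omega), Set.ncard_empty, Nat.cast_zero]
    have hq_closed := Int.eq_ite_toNat_of_natCast hneg h2
    refine ⟨?_, ?_, ?_, ?_⟩ <;> intro he <;> simp only [hq_closed] <;> split_ifs <;> omega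
end

section
/- Let K be an imaginary quadratic field with ring of integers 𝒪_K, let p be an odd rational prime that is inert in K (i.e. p𝒪_K is a prime ideal), and let n ≥ 2 be an integer. Then the number of characters of (𝒪_K/p^n𝒪_K)^× that are trivial on rational integers and nontrivial on the kernel of the natural reduction map (𝒪_K/p^n𝒪_K)^× → (𝒪_K/p^{n−1}𝒪_K)^× equals p^{n−2}(p² − 1). -/
/-!
Let `P = p 𝓞_K`, a prime of norm `p²`, let `G_k = (𝓞_K / Pᵏ)ˣ` and let `H_k ≤ G_k` be the units
represented by rational integers. Characters of a finite abelian group trivial on a subgroup `S`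
are counted by the index of `S`, so the characters trivial on `H_n` but not on the kernel `N` of
the reduction `G_n → G_{n-1}` number `[G_n : H_n] - [G_n : H_n N]`. As `𝓞_K / Pᵏ` is a local
ring, the reduction is onto and maps `H_n` onto `H_{n-1}`, whence `[G_n : H_n N] = [G_{n-1} : H_{n-1}]`.
Finally `|G_k| = p^{2(k-1)} (p² - 1)` and `H_k ≅ (ℤ/pᵏ)ˣ` has order `p^{k-1} (p - 1)`, so
`[G_k : H_k] = p^{k-1} (p + 1)`.
-/

open NumberField

section Characters

variable {G : Type*} [CommGroup G] [Finite G]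

theorem card_characters_trivial_on_eq_index (S : Subgroup G) :
    Nat.card {χ : G →* ℂˣ // ∀ u ∈ S, χ u = 1} = S.index := by
  have : NeZero (Monoid.exponent G) := ⟨Monoid.exponent_ne_zero_of_finite⟩
  rw [Subgroup.index, ← CommGroup.card_domRestrictHom_ker ℂ S]
  refine Nat.card_congr (Equiv.subtypeEquivRight fun χ => ?_)
  rw [MonoidHom.mem_ker, MonoidHom.domRestrictHom_apply, MonoidHom.domRestrict_eq_one_iff]

theorem card_characters_trivial_on_nontrivial_on (H N : Subgroup G) :
    Nat.card {χ : G →* ℂˣ // (∀ u ∈ H, χ u = 1) ∧ ∃ u ∈ N, χ u ≠ 1} =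
      H.index - (H ⊔ N).index := by
  set trivialOn : Subgroup G → Set (G →* ℂˣ) := fun S => {χ | ∀ u ∈ S, χ u = 1}
  have hcard (S : Subgroup G) : (trivialOn S).ncard = S.index :=
    card_characters_trivial_on_eq_index S
  have hsub : trivialOn (H ⊔ N) ⊆ trivialOn H :=
    fun χ hχ u hu => hχ u (Subgroup.mem_sup_left hu)
  have hdiff : {χ : G →* ℂˣ | (∀ u ∈ H, χ u = 1) ∧ ∃ u ∈ N, χ u ≠ 1} =
      trivialOn H \ trivialOn (H ⊔ N) := by
    ext χ
    simp only [trivialOn, Set.mem_ofPred_eq, Set.mem_sdiff, ← MonoidHom.mem_ker,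
      ← SetLike.le_def, sup_le_iff, not_and, SetLike.not_le_iff_exists]
    tauto
  have hfin : (trivialOn (H ⊔ N)).Finite :=
    Set.finite_of_ncard_ne_zero (by rw [hcard]; exact Subgroup.index_ne_zero_of_finite)
  rw [← hcard, ← hcard, ← Set.ncard_sdiff hsub hfin, ← hdiff]
  rfl

end Characters

theorem isLocalHom_of_injective_of_finite {A B : Type*} [Semiring A] [Finite A] [Semiring B]
    (f : A →+* B) (hf : Function.Injective f) : IsLocalHom f :=
  ⟨fun a ha => IsLeftRegular.isUnit_of_finite fun x y hxy =>
    hf (ha.mul_left_cancel (by simpa only [map_mul] using congrArg f hxy))⟩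

section IntUnits

variable (Q : Type*) [CommRing Q]

noncomputable def intUnits : Subgroup Qˣ :=
  (Units.map (ZMod.castHom (dvd_refl (ringChar Q)) Q).toMonoidHom).range

variable {Q} [Finite Q]

theorem mem_intUnits_iff {u : Qˣ} : u ∈ intUnits Q ↔ ∃ m : ℤ, (u : Q) = m := by
  have : NeZero (ringChar Q) := ⟨CharP.ringChar_ne_zero_of_finite Q⟩
  constructor
  · rintro ⟨v, rfl⟩
    obtain ⟨m, hm⟩ := ZMod.intCast_surjective (v : ZMod (ringChar Q))
    exact ⟨m, by simp [← hm]⟩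
  · rintro ⟨m, hm⟩
    have := isLocalHom_of_injective_of_finite _ (ZMod.castHom_injective Q)
    have hunit : IsUnit (m : ZMod (ringChar Q)) := isUnit_of_map_unit
      (ZMod.castHom (dvd_refl _) Q) _ (by rw [map_intCast, ← hm]; exact u.isUnit)
    exact ⟨hunit.unit, Units.ext (by simp [hm])⟩

theorem card_intUnits : Nat.card (intUnits Q) = (ringChar Q).totient := by
  have : NeZero (ringChar Q) := ⟨CharP.ringChar_ne_zero_of_finite Q⟩
  rw [intUnits, ← Nat.card_congr (MonoidHom.ofInjective
    (Units.map_injective (ZMod.castHom_injective Q))).toEquiv, Nat.card_eq_fintype_card,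
    ZMod.card_units_eq_totient]

theorem map_intUnits {Q' : Type*} [CommRing Q'] [Finite Q'] (f : Q →+* Q') [IsLocalHom f] :
    (intUnits Q).map (Units.map f.toMonoidHom) = intUnits Q' := by
  ext v
  rw [Subgroup.mem_map]
  constructor
  · rintro ⟨u, hu, rfl⟩
    obtain ⟨m, hm⟩ := mem_intUnits_iff.mp hu
    exact mem_intUnits_iff.mpr ⟨m, by simp [hm]⟩
  · intro hv
    obtain ⟨m, hm⟩ := mem_intUnits_iff.mp hv
    have hunit : IsUnit (m : Q) :=
      isUnit_of_map_unit f _ (by rw [map_intCast, ← hm]; exact v.isUnit)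
    exact ⟨hunit.unit, mem_intUnits_iff.mpr ⟨m, rfl⟩, Units.ext (by simp [hm])⟩

end IntUnits

theorem card_units_mul_card_eq_of_surjective {Q F : Type*} [CommRing Q] [Finite Q] [Field F]
    (f : Q →+* F) [IsLocalHom f] (hf : Function.Surjective f) :
    Nat.card Qˣ * Nat.card F = Nat.card Q * Nat.card Fˣ := by
  have hQ : Nat.card Q = Nat.card (RingHom.ker f) * Nat.card F := by
    rw [Submodule.card_eq_card_quotient_mul_card (RingHom.ker f),
      Nat.card_congr (RingHom.quotientKerEquivOfSurjective hf).toEquiv, mul_comm]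
  have hunits : Nat.card Qˣ = Nat.card Q - Nat.card (RingHom.ker f) := by
    change _ = _ - (RingHom.ker f : Set Q).ncard
    rw [← Set.ncard_compl]
    refine Nat.card_congr (Submonoid.unitsTypeEquivIsUnitSubmonoid.toEquiv.trans
      (Equiv.subtypeEquivRight fun x => ?_))
    rw [IsUnit.mem_submonoid_iff, ← isUnit_map_iff f, isUnit_iff_ne_zero]
    exact RingHom.mem_ker.not.symm
  rw [hunits, hQ, Nat.card_units, ← Nat.mul_sub_one]
  ring

theorem Ideal.Quotient.exists_mk_eq_and_mk_eq_one_iff {R : Type*} [CommRing R] {I J : Ideal R}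
    (h : I ≤ J) (u : (R ⧸ I)ˣ) :
    (∃ x, Ideal.Quotient.mk I x = u ∧ Ideal.Quotient.mk J x = 1) ↔
      u ∈ (Units.map (Ideal.Quotient.factor h).toMonoidHom).ker := by
  rw [MonoidHom.mem_ker, ← Units.val_eq_one, Units.coe_map, RingHom.toMonoidHom_eq_coe,
    MonoidHom.coe_coe]
  constructor
  · rintro ⟨x, hxu, hx⟩
    rwa [← hxu, Ideal.Quotient.factor_mk]
  · intro hu
    obtain ⟨x, hx⟩ := Ideal.Quotient.mk_surjective (u : R ⧸ I)
    exact ⟨x, hx, by rwa [← hx, Ideal.Quotient.factor_mk] at hu⟩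

section PowMaximal

variable {R : Type*} [CommRing R] (P : Ideal R) [P.IsMaximal]

theorem Ideal.Quotient.isLocalRing_pow {k : ℕ} (hk : k ≠ 0) : IsLocalRing (R ⧸ P ^ k) := by
  have : Nontrivial (R ⧸ P ^ k) := Ideal.Quotient.nontrivial_iff.mpr
    fun h => Ideal.IsMaximal.ne_top ‹_› (top_le_iff.mp (h ▸ Ideal.pow_le_self hk))
  refine IsLocalRing.of_isUnit_or_isUnit_one_sub_self fun x => ?_
  obtain ⟨y, rfl⟩ := Ideal.Quotient.mk_surjective x
  by_cases hy : y ∈ P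
  · right
    rw [← map_one (Ideal.Quotient.mk _), ← map_sub]
    refine Ideal.Quotient.isUnit_mk_pow_of_notMem P fun h => ?_
    exact Ideal.IsMaximal.ne_top ‹_› ((Ideal.eq_top_iff_one P).mpr (by simpa using P.add_mem h hy))
  · exact .inl (Ideal.Quotient.isUnit_mk_pow_of_notMem P hy)

theorem index_intUnits_sup_ker_units_map_factor_pow {j k : ℕ} (hj : j ≠ 0) (hjk : j ≤ k)
    [Finite (R ⧸ P ^ k)] [Finite (R ⧸ P ^ j)] :
    (intUnits (R ⧸ P ^ k) ⊔ (Units.map (Ideal.Quotient.factor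
      (Ideal.pow_le_pow_right hjk : P ^ k ≤ P ^ j)).toMonoidHom).ker).index =
      (intUnits (R ⧸ P ^ j)).index := by
  set red := Ideal.Quotient.factor (Ideal.pow_le_pow_right hjk : P ^ k ≤ P ^ j)
  have : IsLocalRing (R ⧸ P ^ k) := Ideal.Quotient.isLocalRing_pow P (by omega)
  have : IsLocalRing (R ⧸ P ^ j) := Ideal.Quotient.isLocalRing_pow P hj
  have hred := IsLocalHom.of_surjective red (Ideal.Quotient.factor_surjective _)
  rw [← map_intUnits red, ← Subgroup.comap_map_eq, Subgroup.index_comap_of_surjective _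
    (IsLocalRing.surjective_units_map_of_local_ringHom red (Ideal.Quotient.factor_surjective _)
      hred)]

end PowMaximal

theorem charP_quotient_span_natCast (S : Type*) [CommRing S] [Module.FaithfullyFlat ℤ S]
    (n : ℕ) : CharP (S ⧸ Ideal.span {(n : S)}) n := by
  refine ⟨fun a => ?_⟩
  have h := Ideal.comap_map_eq_self_of_faithfullyFlat (B := S) (Ideal.span {(n : ℤ)})
  rw [Ideal.map_span, Set.image_singleton, map_natCast] at h
  rw [← map_natCast (Ideal.Quotient.mk _), Ideal.Quotient.eq_zero_iff_mem,
    ← Int.natCast_dvd_natCast, ← Ideal.mem_span_singleton, ← h, Ideal.mem_comap, map_natCast]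

section SpanNatCast

variable {S : Type*} [CommRing S] [IsDedekindDomain S] [Module.Free ℤ S] [Module.Finite ℤ S]

theorem natCard_quotient_span_natCast_pow (n k : ℕ) :
    Nat.card (S ⧸ Ideal.span {(n : S)} ^ k) = n ^ (Module.finrank ℤ S * k) := by
  rw [Ideal.span_singleton_pow, ← Nat.cast_pow, ← Submodule.cardQuot_apply,
    ← Ideal.absNorm_apply, Ideal.absNorm_span_natCast, ← pow_mul, mul_comm]

theorem finite_quotient_span_natCast_pow {n : ℕ} (hn : n ≠ 0) (k : ℕ) :
    Finite (S ⧸ Ideal.span {(n : S)} ^ k) :=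
  Nat.finite_of_card_ne_zero (by simp [natCard_quotient_span_natCast_pow, hn])

theorem charP_quotient_span_natCast_pow (n k : ℕ) :
    CharP (S ⧸ Ideal.span {(n : S)} ^ k) (n ^ k) := by
  rw [Ideal.span_singleton_pow, ← Nat.cast_pow]
  exact charP_quotient_span_natCast S (n ^ k)

theorem index_intUnits_quotient_span_pow {p : ℕ} (hp : p.Prime)
    [(Ideal.span {(p : S)}).IsMaximal] (hrank : Module.finrank ℤ S = 2) {k : ℕ} (hk : k ≠ 0) :
    (intUnits (S ⧸ Ideal.span {(p : S)} ^ k)).index = p ^ (k - 1) * (p + 1) := by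
  set P := Ideal.span {(p : S)}
  have hcard (j : ℕ) : Nat.card (S ⧸ P ^ j) = p ^ (2 * j) := by
    rw [natCard_quotient_span_natCast_pow, hrank]
  have : Finite (S ⧸ P ^ k) := finite_quotient_span_natCast_pow hp.ne_zero k
  have : IsLocalRing (S ⧸ P ^ k) := Ideal.Quotient.isLocalRing_pow P hk
  have : CharP (S ⧸ P ^ k) (p ^ k) := charP_quotient_span_natCast_pow p k
  let := Ideal.Quotient.field P
  have hred : P ^ k ≤ P := Ideal.pow_le_self hk
  have := IsLocalHom.of_surjective _ (Ideal.Quotient.factor_surjective hred)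
  have hunits := card_units_mul_card_eq_of_surjective _ (Ideal.Quotient.factor_surjective hred)
  have hint : Nat.card (intUnits (S ⧸ P ^ k)) = p ^ (k - 1) * (p - 1) := by
    rw [card_intUnits, ringChar.eq (S ⧸ P ^ k) (p ^ k), Nat.totient_prime_pow hp (by omega)]
  have hP : Nat.card (S ⧸ P) = p ^ 2 := by simpa using hcard 1
  rw [hcard, Nat.card_units, hP, ← (intUnits (S ⧸ P ^ k)).index_mul_card, hint] at hunits
  have hpos : 0 < p ^ (k - 1) * (p - 1) * p ^ 2 :=
    Nat.mul_pos (Nat.mul_pos (pow_pos hp.pos _) (Nat.sub_pos_of_lt hp.one_lt)) (pow_pos hp.pos _)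
  refine Nat.eq_of_mul_eq_mul_right hpos ?_
  obtain ⟨j, rfl⟩ := Nat.exists_eq_add_one.mpr (Nat.pos_of_ne_zero hk)
  have hsq : p ^ 2 - 1 = (p + 1) * (p - 1) := by simpa using Nat.sq_sub_sq p 1
  rw [← mul_assoc, hunits, hsq, Nat.add_sub_cancel]
  ring

end SpanNatCast

theorem card_characters_trivial_on_Int_primitive_inert_general
    (K : Type*) [Field K] [NumberField K]
    (hdeg : Module.finrank ℚ K = 2)
    (p : ℕ) (hp : p.Prime)
    (hinert : (Ideal.span {(p : 𝓞 K)}).IsPrime)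
    (n : ℕ) (hn : 2 ≤ n) :
    Nat.card {χ : (𝓞 K ⧸ Ideal.span {(p : 𝓞 K) ^ n})ˣ →* ℂˣ //
      (∀ u : (𝓞 K ⧸ Ideal.span {(p : 𝓞 K) ^ n})ˣ,
        (∃ m : ℤ, (u : 𝓞 K ⧸ Ideal.span {(p : 𝓞 K) ^ n}) =
          Ideal.Quotient.mk (Ideal.span {(p : 𝓞 K) ^ n}) (m : 𝓞 K)) →
        χ u = 1) ∧
      ∃ (u : (𝓞 K ⧸ Ideal.span {(p : 𝓞 K) ^ n})ˣ) (x : 𝓞 K),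
        Ideal.Quotient.mk (Ideal.span {(p : 𝓞 K) ^ n}) x =
          (u : 𝓞 K ⧸ Ideal.span {(p : 𝓞 K) ^ n}) ∧
        Ideal.Quotient.mk (Ideal.span {(p : 𝓞 K) ^ (n - 1)}) x = 1 ∧
        χ u ≠ 1} = p ^ (n - 2) * (p ^ 2 - 1) := by
  rw [← Ideal.span_singleton_pow, ← Ideal.span_singleton_pow]
  set P := Ideal.span {(p : 𝓞 K)}
  have : P.IsMaximal := hinert.isMaximal (by simpa [P] using hp.ne_zero)
  have hrank : Module.finrank ℤ (𝓞 K) = 2 := by rw [RingOfIntegers.rank, hdeg]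
  have : Finite (𝓞 K ⧸ P ^ n) := finite_quotient_span_natCast_pow hp.ne_zero n
  have : Finite (𝓞 K ⧸ P ^ (n - 1)) := finite_quotient_span_natCast_pow hp.ne_zero (n - 1)
  simp only [map_intCast, ← mem_intUnits_iff, ← and_assoc, exists_and_right,
    Ideal.Quotient.exists_mk_eq_and_mk_eq_one_iff (Ideal.pow_le_pow_right (n.sub_le 1))]
  rw [card_characters_trivial_on_nontrivial_on,
    index_intUnits_sup_ker_units_map_factor_pow P (by omega) (n.sub_le 1),
    index_intUnits_quotient_span_pow hp hrank (by omega),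
    index_intUnits_quotient_span_pow hp hrank (by omega)]
  obtain ⟨m, rfl⟩ := Nat.exists_eq_add_of_le' hn
  have hsq : p ^ 2 - 1 = (p + 1) * (p - 1) := by simpa using Nat.sq_sub_sq p 1
  rw [show m + 2 - 1 - 1 = m by omega, show m + 2 - 1 = m + 1 by omega, Nat.add_sub_cancel, hsq,
    pow_succ, mul_right_comm, ← Nat.mul_sub_one]
  ring

/-- Let `K` be an imaginary quadratic field, `p` an odd rational prime that is inert in
`K`, and `n ≥ 2`. Then the number of characters of `(𝓞 K / p^n 𝓞 K)ˣ` that are trivial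
on rational integers and nontrivial on the kernel of the natural reduction map
`(𝓞 K / p^n 𝓞 K)ˣ → (𝓞 K / p^(n−1) 𝓞 K)ˣ` equals `p^(n−2) (p² − 1)`.
(A unit `u` lies in that kernel exactly when some (equivalently, any) lift `x ∈ 𝓞 K` of
`u` reduces to `1` modulo `p^(n−1) 𝓞 K`.) -/
theorem card_characters_trivial_on_Int_primitive_inert
    (K : Type*) [Field K] [NumberField K]
    (hdeg : Module.finrank ℚ K = 2) (himag : IsEmpty (K →+* ℝ))
    (p : ℕ) (hp : p.Prime) (hp2 : p ≠ 2)
    (hinert : (Ideal.span {(p : 𝓞 K)}).IsPrime)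
    (n : ℕ) (hn : 2 ≤ n) :
    Nat.card {χ : (𝓞 K ⧸ Ideal.span {(p : 𝓞 K) ^ n})ˣ →* ℂˣ //
      (∀ u : (𝓞 K ⧸ Ideal.span {(p : 𝓞 K) ^ n})ˣ,
        (∃ m : ℤ, (u : 𝓞 K ⧸ Ideal.span {(p : 𝓞 K) ^ n}) =
          Ideal.Quotient.mk (Ideal.span {(p : 𝓞 K) ^ n}) (m : 𝓞 K)) →
        χ u = 1) ∧
      ∃ (u : (𝓞 K ⧸ Ideal.span {(p : 𝓞 K) ^ n})ˣ) (x : 𝓞 K),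
        Ideal.Quotient.mk (Ideal.span {(p : 𝓞 K) ^ n}) x =
          (u : 𝓞 K ⧸ Ideal.span {(p : 𝓞 K) ^ n}) ∧
        Ideal.Quotient.mk (Ideal.span {(p : 𝓞 K) ^ (n - 1)}) x = 1 ∧
        χ u ≠ 1} = p ^ (n - 2) * (p ^ 2 - 1) :=
  card_characters_trivial_on_Int_primitive_inert_general K hdeg p hp hinert n hn
end

section
/- Let K be an imaginary quadratic field with ring of integers 𝒪_K, and let p be an odd rational prime that is split in K, with p𝒪_K = 𝔭·𝔭̄ for distinct prime ideals 𝔭 and 𝔭̄. Let t ≥ 1 and let χ be a character of (𝒪_K/p^t𝒪_K)^× that is trivial on rational integers. Suppose integers α, β with 0 ≤ α, β ≤ t are such that: χ is trivial on the kernel of the natural reduction map (𝒪_K/p^t𝒪_K)^× → (𝒪_K/𝔭^α𝔭̄^β)^×; if α ≥ 1 then χ is nontrivial on the kernel of the natural reduction map (𝒪_K/p^t𝒪_K)^× → (𝒪_K/𝔭^{α−1}𝔭̄^β)^×; and if β ≥ 1 then χ is nontrivial on the kernel of the natural reduction map (𝒪_K/p^t𝒪_K)^× → (𝒪_K/𝔭^α𝔭̄^{β−1})^×.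 Then α = β. -/
/-!
Suppose `α < β` and let `u`, with lift `x ≡ 1 (mod 𝔭^α 𝔭̄^(β-1))`, satisfy `χ u ≠ 1`. Because `p`
splits in a quadratic field, `𝒪_K ⧸ 𝔭̄^β` has `p^β` elements and characteristic `p^β`, so it is
`ℤ ⧸ p^β`: pick an integer `n ≡ x (mod 𝔭̄^β)`. Then `n ≡ 1 (mod 𝔭̄^(β-1))`, and an integer in
`𝔭̄^k` is divisible by `p^k`, so `n ≡ 1 (mod 𝔭^(β-1))` and in particular modulo `𝔭^α`. Hence `u`
and the integer unit `n` agree modulo `𝔭^α 𝔭̄^β`, and `χ u = χ n = 1`. The case `β < α` is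
symmetric.
-/

open NumberField Ideal

section Quotient

variable {R : Type*} [CommRing R]

theorem isUnit_intCast_of_isCoprime {a n : ℤ} (h : IsCoprime a n) (ha : (a : R) = 0) :
    IsUnit (n : R) :=
  isCoprime_zero_left.mp (ha ▸ h.intCast)

theorem notMem_of_isUnit_mk {I Q : Ideal R} (hIQ : I ≤ Q) (hQ : Q ≠ ⊤) {x : R}
    (hx : IsUnit (Ideal.Quotient.mk I x)) : x ∉ Q := by
  intro hxQ
  have := hx.map (Ideal.Quotient.factor hIQ)
  rw [Ideal.Quotient.factor_mk, Ideal.Quotient.eq_zero_iff_mem.mpr hxQ, isUnit_zero_iff,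
    eq_comm, ← map_one (Ideal.Quotient.mk Q), Ideal.Quotient.eq_zero_iff_mem,
    ← eq_top_iff_one] at this
  exact hQ this

variable {I : Ideal R} {G : Type*} [Group G]

def IsTrivialOnReductionKernel (χ : (R ⧸ I)ˣ →* G) (J : Ideal R) : Prop :=
  ∀ (u : (R ⧸ I)ˣ) (x : R), Ideal.Quotient.mk I x = u → Ideal.Quotient.mk J x = 1 → χ u = 1

theorem IsTrivialOnReductionKernel.map_eq {χ : (R ⧸ I)ˣ →* G} {J : Ideal R} (hIJ : I ≤ J)
    (hχ : IsTrivialOnReductionKernel χ J) {u v : (R ⧸ I)ˣ} {x y : R}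
    (hx : Ideal.Quotient.mk I x = u) (hy : Ideal.Quotient.mk I y = v)
    (hxy : Ideal.Quotient.mk J x = Ideal.Quotient.mk J y) : χ u = χ v := by
  have hker : Units.map (Ideal.Quotient.factor hIJ).toMonoidHom (u * v⁻¹) = 1 := by
    rw [map_mul, map_inv, mul_inv_eq_one]
    ext
    simp [← hx, ← hy, hxy]
  obtain ⟨z, hz⟩ := Ideal.Quotient.mk_surjective ((u * v⁻¹ : (R ⧸ I)ˣ) : R ⧸ I)
  have hz1 : Ideal.Quotient.mk J z = 1 := by
    rw [← Ideal.Quotient.factor_mk hIJ, hz]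
    exact congrArg Units.val hker
  exact mul_inv_eq_one.mp (by simpa using hχ _ z hz hz1)

end Quotient

section SplitPrime

variable {R : Type*} [CommRing R] {p : ℕ} {P Q : Ideal R}

theorem natCast_dvd_of_intCast_mem (hp : p.Prime) (hQ : Q.IsPrime) (hpQ : (p : R) ∈ Q) {m : ℤ}
    (hm : (m : R) ∈ Q) : (p : ℤ) ∣ m := by
  by_contra hpm
  obtain ⟨a, b, hab⟩ :=
    ((Nat.prime_iff_prime_int.mp hp).coprime_iff_not_dvd.mpr hpm).intCast (R := R)
  apply hQ.ne_top
  rw [eq_top_iff_one, ← hab]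
  exact add_mem (mul_mem_left _ _ (by exact_mod_cast hpQ)) (mul_mem_left _ _ hm)

theorem natCast_pow_mem_pow_left (hsplit : span {(p : R)} = P * Q) (k : ℕ) :
    (p : R) ^ k ∈ P ^ k :=
  pow_mem_pow (mul_le_left (hsplit.le (mem_span_singleton_self _))) k

theorem isCoprime_of_span_eq_mul [CharZero R] [Ring.DimensionLEOne R] (hp : p ≠ 0)
    (hP : P.IsPrime) (hQ : Q.IsPrime) (hne : P ≠ Q) (hsplit : span {(p : R)} = P * Q) :
    IsCoprime P Q := by
  have hpPQ : (p : R) ∈ P * Q := hsplit.le (mem_span_singleton_self _)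
  have hp0 : (p : R) ≠ 0 := Nat.cast_ne_zero.mpr hp
  have := hP.isMaximal ((Submodule.ne_bot_iff P).mpr ⟨p, mul_le_left hpPQ, hp0⟩)
  have := hQ.isMaximal ((Submodule.ne_bot_iff Q).mpr ⟨p, mul_le_right hpPQ, hp0⟩)
  exact isCoprime_of_isMaximal hne

variable [IsDomain R] [CharZero R]

theorem natCast_pow_dvd_of_intCast_mem_pow (hp : p.Prime) (hQ : Q.IsPrime) (hPQ : IsCoprime P Q)
    (hsplit : span {(p : R)} = P * Q) {k : ℕ} {m : ℤ} (hm : (m : R) ∈ Q ^ k) :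
    (p : ℤ) ^ k ∣ m := by
  have hpPQ : (p : R) ∈ P * Q := hsplit.le (mem_span_singleton_self _)
  induction k generalizing m with
  | zero => exact one_dvd m
  | succ k ih =>
    obtain ⟨m, rfl⟩ := natCast_dvd_of_intCast_mem hp hQ (mul_le_right hpPQ)
      (pow_le_self k.succ_ne_zero hm)
    push_cast at hm
    have hmem : (p : R) * m ∈ span {(p : R)} * Q ^ k := by
      rw [hsplit, mul_assoc, ← pow_succ', mul_eq_inf_of_isCoprime hPQ.pow_right]
      exact ⟨mul_mem_right _ _ (mul_le_left hpPQ), hm⟩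
    obtain ⟨z, hz, hzm⟩ := mem_span_singleton_mul.mp hmem
    rw [mul_left_cancel₀ (Nat.cast_ne_zero.mpr hp.ne_zero) hzm] at hz
    rw [pow_succ']
    exact mul_dvd_mul_left _ (ih hz)

-- Integers cannot tell the two primes above `p` apart.
theorem intCast_mem_pow_of_mem_pow (hp : p.Prime) (hQ : Q.IsPrime) (hPQ : IsCoprime P Q)
    (hsplit : span {(p : R)} = P * Q) {k : ℕ} {m : ℤ} (hm : (m : R) ∈ Q ^ k) :
    (m : R) ∈ P ^ k := by
  obtain ⟨c, rfl⟩ := natCast_pow_dvd_of_intCast_mem_pow hp hQ hPQ hsplit hm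
  push_cast
  exact mul_mem_right _ _ (natCast_pow_mem_pow_left hsplit k)

theorem charP_quotient_pow (hp : p.Prime) (hQ : Q.IsPrime) (hPQ : IsCoprime P Q)
    (hsplit : span {(p : R)} = P * Q) (k : ℕ) : CharP (R ⧸ Q ^ k) (p ^ k) := by
  refine ⟨fun x => ?_⟩
  rw [← map_natCast (Ideal.Quotient.mk (Q ^ k)), Ideal.Quotient.eq_zero_iff_mem]
  constructor
  · intro hx
    exact_mod_cast natCast_pow_dvd_of_intCast_mem_pow (m := x) hp hQ hPQ hsplit
      (by exact_mod_cast hx)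
  · rintro ⟨c, rfl⟩
    push_cast
    exact mul_mem_right _ _ (natCast_pow_mem_pow_left (mul_comm P Q ▸ hsplit) k)

-- `R ⧸ Q ^ k` has characteristic `p ^ k` and `p ^ k` elements, so it is `ZMod (p ^ k)`.
theorem exists_intCast_sub_mem_pow (hp : p.Prime) (hQ : Q.IsPrime) (hPQ : IsCoprime P Q)
    (hsplit : span {(p : R)} = P * Q) {k : ℕ} (hcard : Nat.card (R ⧸ Q ^ k) = p ^ k) (x : R) :
    ∃ n : ℤ, x - n ∈ Q ^ k := by
  have := charP_quotient_pow hp hQ hPQ hsplit k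
  have : Finite (R ⧸ Q ^ k) := Nat.finite_of_card_ne_zero (hcard ▸ pow_ne_zero k hp.ne_zero)
  have := Fintype.ofFinite (R ⧸ Q ^ k)
  obtain ⟨a, ha⟩ := (ZMod.ringEquiv (R ⧸ Q ^ k)
    (by rw [← Nat.card_eq_fintype_card, hcard])).surjective (Ideal.Quotient.mk _ x)
  obtain ⟨n, rfl⟩ := ZMod.intCast_surjective a
  refine ⟨n, ?_⟩
  rw [← Ideal.Quotient.mk_eq_mk_iff_sub_mem, ← ha, map_intCast, map_intCast]

end SplitPrime

section NumberField

variable {K : Type*} [Field K] [NumberField K] {p : ℕ} {P Q : Ideal (𝓞 K)}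

theorem absNorm_eq_of_span_eq_mul (hdeg : Module.finrank ℚ K = 2) (hp : p.Prime) (hP : P ≠ ⊤)
    (hQ : Q ≠ ⊤) (hsplit : span {(p : 𝓞 K)} = P * Q) : absNorm Q = p := by
  have hnorm : absNorm P * absNorm Q = p ^ 2 := by
    rw [← map_mul, ← hsplit, absNorm_span_natCast, RingOfIntegers.rank, hdeg]
  exact ((hp.mul_eq_prime_sq_iff (mt absNorm_eq_one_iff.mp hP)
    (mt absNorm_eq_one_iff.mp hQ)).mp hnorm).2

theorem natCard_quotient_pow_of_span_eq_mul (hdeg : Module.finrank ℚ K = 2) (hp : p.Prime)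
    (hP : P ≠ ⊤) (hQ : Q ≠ ⊤) (hsplit : span {(p : 𝓞 K)} = P * Q) (k : ℕ) :
    Nat.card (𝓞 K ⧸ Q ^ k) = p ^ k := by
  rw [← Submodule.cardQuot_apply, ← absNorm_apply, map_pow,
    absNorm_eq_of_span_eq_mul hdeg hp hP hQ hsplit]

theorem IsTrivialOnReductionKernel.of_lt (hdeg : Module.finrank ℚ K = 2) (hp : p.Prime)
    (hP : P ≠ ⊤) (hQ : Q.IsPrime) (hPQ : IsCoprime P Q) (hsplit : span {(p : 𝓞 K)} = P * Q)
    {t α β : ℕ} {χ : (𝓞 K ⧸ span {(p : 𝓞 K) ^ t})ˣ →* ℂˣ}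
    (htriv : ∀ u : (𝓞 K ⧸ span {(p : 𝓞 K) ^ t})ˣ,
      (∃ m : ℤ, (u : 𝓞 K ⧸ span {(p : 𝓞 K) ^ t}) =
        Ideal.Quotient.mk (span {(p : 𝓞 K) ^ t}) (m : 𝓞 K)) → χ u = 1)
    (hαβ : α < β) (hβ : β ≤ t) (hχ : IsTrivialOnReductionKernel χ (P ^ α * Q ^ β)) :
    IsTrivialOnReductionKernel χ (P ^ α * Q ^ (β - 1)) := by
  intro u x hx hx1
  rw [← map_one (Ideal.Quotient.mk _), Ideal.Quotient.mk_eq_mk_iff_sub_mem] at hx1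
  have hIJ : span {(p : 𝓞 K) ^ t} ≤ P ^ α * Q ^ β := by
    rw [← span_singleton_pow, hsplit, mul_pow]
    exact mul_mono (pow_le_pow_right (by omega)) (pow_le_pow_right hβ)
  obtain ⟨n, hn⟩ := exists_intCast_sub_mem_pow hp hQ hPQ hsplit
    (natCard_quotient_pow_of_span_eq_mul hdeg hp hP hQ.ne_top hsplit β) x
  have hn1 : ((n - 1 : ℤ) : 𝓞 K) ∈ P ^ α := by
    have hn1Q : ((n - 1 : ℤ) : 𝓞 K) ∈ Q ^ (β - 1) := by
      rw [show ((n - 1 : ℤ) : 𝓞 K) = (x - 1) - (x - n) by push_cast; ring]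
      exact sub_mem (mul_le_right hx1) (pow_le_pow_right (Nat.sub_le β 1) hn)
    exact pow_le_pow_right (show α ≤ β - 1 by omega)
      (intCast_mem_pow_of_mem_pow hp hQ hPQ hsplit hn1Q)
  have hxnP : x - n ∈ P ^ α := by
    rw [show x - n = (x - 1) - ((n - 1 : ℤ) : 𝓞 K) by push_cast; ring]
    exact sub_mem (mul_le_left hx1) hn1
  have hxn : x - n ∈ P ^ α * Q ^ β := by
    rw [mul_eq_inf_of_isCoprime hPQ.pow]
    exact mem_inf.mpr ⟨hxnP, hn⟩
  have hnQ : (n : 𝓞 K) ∉ Q := by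
    intro hnQ
    refine notMem_of_isUnit_mk (hIJ.trans (mul_le_right.trans (pow_le_self (by omega))))
      hQ.ne_top (hx ▸ u.isUnit) ?_
    simpa using add_mem (pow_le_self (by omega) hn) hnQ
  have hpn : IsCoprime ((p : ℤ) ^ t) n := by
    refine ((Nat.prime_iff_prime_int.mp hp).coprime_iff_not_dvd.mpr ?_).pow_left
    rintro ⟨c, rfl⟩
    push_cast at hnQ
    exact hnQ (mul_mem_right _ _ (mul_le_right (hsplit.le (mem_span_singleton_self _))))
  have hn_unit : IsUnit (Ideal.Quotient.mk (span {(p : 𝓞 K) ^ t}) (n : 𝓞 K)) := by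
    rw [map_intCast]
    refine isUnit_intCast_of_isCoprime hpn ?_
    rw [Int.cast_pow, Int.cast_natCast, ← map_natCast (Ideal.Quotient.mk _), ← map_pow,
      Ideal.Quotient.eq_zero_iff_mem]
    exact mem_span_singleton_self _
  calc χ u = χ hn_unit.unit :=
        hχ.map_eq hIJ hx rfl ((Ideal.Quotient.mk_eq_mk_iff_sub_mem _ _).mpr hxn)
    _ = 1 := htriv _ ⟨n, rfl⟩

end NumberField

theorem conductor_exponents_balanced_split_general
    (K : Type*) [Field K] [NumberField K]
    (hdeg : Module.finrank ℚ K = 2)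
    (p : ℕ) (hp : p.Prime)
    (P Pbar : Ideal (𝓞 K)) (hP : P.IsPrime) (hPbar : Pbar.IsPrime) (hne : P ≠ Pbar)
    (hsplit : Ideal.span {(p : 𝓞 K)} = P * Pbar)
    (t : ℕ)
    (χ : (𝓞 K ⧸ Ideal.span {(p : 𝓞 K) ^ t})ˣ →* ℂˣ)
    (htriv : ∀ u : (𝓞 K ⧸ Ideal.span {(p : 𝓞 K) ^ t})ˣ,
      (∃ m : ℤ, (u : 𝓞 K ⧸ Ideal.span {(p : 𝓞 K) ^ t}) =
        Ideal.Quotient.mk (Ideal.span {(p : 𝓞 K) ^ t}) (m : 𝓞 K)) →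
      χ u = 1)
    (α β : ℕ) (hα : α ≤ t) (hβ : β ≤ t)
    (h1 : ∀ (u : (𝓞 K ⧸ Ideal.span {(p : 𝓞 K) ^ t})ˣ) (x : 𝓞 K),
      Ideal.Quotient.mk (Ideal.span {(p : 𝓞 K) ^ t}) x =
        (u : 𝓞 K ⧸ Ideal.span {(p : 𝓞 K) ^ t}) →
      Ideal.Quotient.mk (P ^ α * Pbar ^ β) x = 1 → χ u = 1)
    (h2 : 1 ≤ α → ∃ (u : (𝓞 K ⧸ Ideal.span {(p : 𝓞 K) ^ t})ˣ) (x : 𝓞 K),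
      Ideal.Quotient.mk (Ideal.span {(p : 𝓞 K) ^ t}) x =
        (u : 𝓞 K ⧸ Ideal.span {(p : 𝓞 K) ^ t}) ∧
      Ideal.Quotient.mk (P ^ (α - 1) * Pbar ^ β) x = 1 ∧ χ u ≠ 1)
    (h3 : 1 ≤ β → ∃ (u : (𝓞 K ⧸ Ideal.span {(p : 𝓞 K) ^ t})ˣ) (x : 𝓞 K),
      Ideal.Quotient.mk (Ideal.span {(p : 𝓞 K) ^ t}) x =
        (u : 𝓞 K ⧸ Ideal.span {(p : 𝓞 K) ^ t}) ∧
      Ideal.Quotient.mk (P ^ α * Pbar ^ (β - 1)) x = 1 ∧ χ u ≠ 1) :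
    α = β := by
  have hPQ := isCoprime_of_span_eq_mul hp.ne_zero hP hPbar hne hsplit
  rcases lt_trichotomy α β with hlt | heq | hgt
  · obtain ⟨u, x, hx, hx1, hχu⟩ := h3 (by omega)
    exact absurd (IsTrivialOnReductionKernel.of_lt hdeg hp hP.ne_top hPbar hPQ hsplit htriv
      hlt hβ h1 u x hx hx1) hχu
  · exact heq
  · obtain ⟨u, x, hx, hx1, hχu⟩ := h2 (by omega)
    have h1' : IsTrivialOnReductionKernel χ (Pbar ^ β * P ^ α) := mul_comm (P ^ α) _ ▸ h1
    exact absurd (IsTrivialOnReductionKernel.of_lt hdeg hp hPbar.ne_top hP hPQ.symm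
      (by rw [hsplit, mul_comm]) htriv hgt hα h1' u x hx (by rwa [mul_comm])) hχu

/-- Let `K` be an imaginary quadratic field and `p` an odd rational prime that is split
in `K`, with `p 𝓞 K = 𝔭 · 𝔭̄` for distinct prime ideals `𝔭`, `𝔭̄`. Let `t ≥ 1` and let
`χ` be a character of `(𝓞 K / p^t 𝓞 K)ˣ` that is trivial on rational integers. Suppose
`0 ≤ α, β ≤ t` are such that `χ` is trivial on the kernel of the reduction to
`(𝓞 K / 𝔭^α 𝔭̄^β)ˣ`, and (if `α ≥ 1`, resp. `β ≥ 1`) nontrivial on the kernel of the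
reduction to `(𝓞 K / 𝔭^(α−1) 𝔭̄^β)ˣ`, resp. `(𝓞 K / 𝔭^α 𝔭̄^(β−1))ˣ`. Then `α = β`.
(A unit `u` lies in the kernel of the reduction modulo an ideal `J ⊇ p^t 𝓞 K` exactly
when some (equivalently, any) lift `x ∈ 𝓞 K` of `u` reduces to `1` modulo `J`.) -/
theorem conductor_exponents_balanced_split
    (K : Type*) [Field K] [NumberField K]
    (hdeg : Module.finrank ℚ K = 2) (himag : IsEmpty (K →+* ℝ))
    (p : ℕ) (hp : p.Prime) (hp2 : p ≠ 2)
    (P Pbar : Ideal (𝓞 K)) (hP : P.IsPrime) (hPbar : Pbar.IsPrime) (hne : P ≠ Pbar)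
    (hsplit : Ideal.span {(p : 𝓞 K)} = P * Pbar)
    (t : ℕ) (ht : 1 ≤ t)
    (χ : (𝓞 K ⧸ Ideal.span {(p : 𝓞 K) ^ t})ˣ →* ℂˣ)
    (htriv : ∀ u : (𝓞 K ⧸ Ideal.span {(p : 𝓞 K) ^ t})ˣ,
      (∃ m : ℤ, (u : 𝓞 K ⧸ Ideal.span {(p : 𝓞 K) ^ t}) =
        Ideal.Quotient.mk (Ideal.span {(p : 𝓞 K) ^ t}) (m : 𝓞 K)) →
      χ u = 1)
    (α β : ℕ) (hα : α ≤ t) (hβ : β ≤ t)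
    (h1 : ∀ (u : (𝓞 K ⧸ Ideal.span {(p : 𝓞 K) ^ t})ˣ) (x : 𝓞 K),
      Ideal.Quotient.mk (Ideal.span {(p : 𝓞 K) ^ t}) x =
        (u : 𝓞 K ⧸ Ideal.span {(p : 𝓞 K) ^ t}) →
      Ideal.Quotient.mk (P ^ α * Pbar ^ β) x = 1 → χ u = 1)
    (h2 : 1 ≤ α → ∃ (u : (𝓞 K ⧸ Ideal.span {(p : 𝓞 K) ^ t})ˣ) (x : 𝓞 K),
      Ideal.Quotient.mk (Ideal.span {(p : 𝓞 K) ^ t}) x =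
        (u : 𝓞 K ⧸ Ideal.span {(p : 𝓞 K) ^ t}) ∧
      Ideal.Quotient.mk (P ^ (α - 1) * Pbar ^ β) x = 1 ∧ χ u ≠ 1)
    (h3 : 1 ≤ β → ∃ (u : (𝓞 K ⧸ Ideal.span {(p : 𝓞 K) ^ t})ˣ) (x : 𝓞 K),
      Ideal.Quotient.mk (Ideal.span {(p : 𝓞 K) ^ t}) x =
        (u : 𝓞 K ⧸ Ideal.span {(p : 𝓞 K) ^ t}) ∧
      Ideal.Quotient.mk (P ^ α * Pbar ^ (β - 1)) x = 1 ∧ χ u ≠ 1) :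
    α = β :=
  conductor_exponents_balanced_split_general K hdeg p hp P Pbar hP hPbar hne hsplit t χ htriv α β hα
    hβ h1 h2 h3
end
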